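/- Let V₁ and V₂ be two members of the optimistic value function class 𝒱, with respective parameters (w_{1,1},…,w_{1,ℓ}, Γ_{1,1},…,Γ_{1,ℓ}) and (w_{2,1},…,w_{2,ℓ}, Γ_{2,1},…,Γ_{2,ℓ}). Then sup_{s∈S} |V₁(s) − V₂(s)| ≤ β · max_{1≤j≤ℓ} √(‖Γ_{1,j} − Γ_{2,j}‖_F) + max_{1≤j≤ℓ} ‖w_{1,j} − w_{2,j}‖₂, where ‖·‖_F is the Frobenius norm. -/

import Mathlib

/-! The value `V(s)` is a maximum over the finite set `A × [ℓ]` of the truncations at `H` of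
`r + φᵀw_j + β ∑ φ_i √((Γ_j)_{ii})`. Maxima and truncation are 1-Lipschitz for the sup-distance,
and since `φ(s,a)` is a probability vector, the two `φ`-averages move by at most
`max_i |w_{1,j,i} - w_{2,j,i}| ≤ ‖w_{1,j} - w_{2,j}‖₂` and
`max_i |√(Γ_{1,j})_{ii} - √(Γ_{2,j})_{ii}| ≤ max_i √|(Γ_{1,j} - Γ_{2,j})_{ii}| ≤ √‖Γ_{1,j} - Γ_{2,j}‖_F`,
the middle step being the Hölder-`1/2` continuity of the square root. -/

open Finset

/-- The value function determined by parameters `w_j, Γ_j`, `1 ≤ j ≤ ℓ`: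
`V(s) = max_{a∈A} max_{1≤j≤ℓ} min{ r(s,a) + φ(s,a)^⊤ w_j
          + β ∑_i φ_i(s,a) √((Γ_j)_{ii}), H }`. -/
noncomputable def optimisticValue {S A : Type*} [Fintype A] (d l : ℕ)
    (φ : S → A → Fin d → ℝ) (r : S → A → ℝ) (β H : ℝ)
    (w : Fin l → Fin d → ℝ) (Γ : Fin l → Matrix (Fin d) (Fin d) ℝ) (s : S) : ℝ :=
  ⨆ a : A, ⨆ j : Fin l,
    min (r s a + (∑ i, φ s a i * w j i) + β * ∑ i, φ s a i * Real.sqrt (Γ j i i)) H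

theorem abs_min_sub_min_le_abs {α : Type*} [AddCommGroup α] [LinearOrder α]
    [IsOrderedAddMonoid α] (a b c : α) : |min a c - min b c| ≤ |a - b| := by
  simpa only [sub_self, abs_zero, max_eq_left (abs_nonneg (a - b))]
    using abs_min_sub_min_le_max a c b c

namespace Real

theorem sqrt_le_sqrt_abs_sub_add_sqrt (x y : ℝ) : √x ≤ √|x - y| + √y := by
  rcases le_total y 0 with hy | hy
  · rw [sqrt_eq_zero_of_nonpos hy, add_zero]
    exact sqrt_le_sqrt ((by linarith : x ≤ x - y).trans (le_abs_self _))
  · refine sqrt_le_iff.2 ⟨by positivity, ?_⟩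
    have hxy := le_abs_self (x - y)
    nlinarith [sq_sqrt (abs_nonneg (x - y)), sq_sqrt hy, sqrt_nonneg |x - y|, sqrt_nonneg y]

theorem abs_sqrt_sub_sqrt_le_sqrt_abs_sub (x y : ℝ) : |√x - √y| ≤ √|x - y| := by
  refine abs_sub_le_iff.2 ⟨?_, ?_⟩
  · linarith [sqrt_le_sqrt_abs_sub_add_sqrt x y]
  · linarith [abs_sub_comm x y ▸ sqrt_le_sqrt_abs_sub_add_sqrt y x]

end Real

theorem ciSup_le_ciSup_add {ι : Type*} [Nonempty ι] {f g : ι → ℝ} {c : ℝ}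
    (hg : BddAbove (Set.range g)) (h : ∀ i, f i ≤ g i + c) : ⨆ i, f i ≤ (⨆ i, g i) + c :=
  ciSup_le fun i => (h i).trans (add_le_add_left (le_ciSup hg i) c)

theorem abs_ciSup_sub_ciSup_le {ι : Type*} [Finite ι] [Nonempty ι] {f g : ι → ℝ} {c : ℝ}
    (h : ∀ i, |f i - g i| ≤ c) : |(⨆ i, f i) - ⨆ i, g i| ≤ c := by
  refine abs_sub_le_iff.2 ⟨sub_le_iff_le_add'.2 ?_, sub_le_iff_le_add'.2 ?_⟩
  · exact ciSup_le_ciSup_add (Set.finite_range g).bddAbove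
      fun i => by linarith [(abs_sub_le_iff.1 (h i)).1]
  · exact ciSup_le_ciSup_add (Set.finite_range f).bddAbove
      fun i => by linarith [(abs_sub_le_iff.1 (h i)).2]

theorem abs_sum_mul_sub_sum_mul_le {ι : Type*} [Fintype ι] {p x y : ι → ℝ} {c : ℝ}
    (hp0 : ∀ i, 0 ≤ p i) (hp1 : ∑ i, p i = 1) (h : ∀ i, |x i - y i| ≤ c) :
    |∑ i, p i * x i - ∑ i, p i * y i| ≤ c :=
  calc |∑ i, p i * x i - ∑ i, p i * y i| = |∑ i, p i * (x i - y i)| := by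
        simp only [mul_sub, sum_sub_distrib]
    _ ≤ ∑ i, |p i * (x i - y i)| := abs_sum_le_sum_abs _ _
    _ ≤ ∑ i, p i * c := sum_le_sum fun i _ => by
        rw [abs_mul, abs_of_nonneg (hp0 i)]
        exact mul_le_mul_of_nonneg_left (h i) (hp0 i)
    _ = c := by rw [← sum_mul, hp1, one_mul]

theorem abs_le_sqrt_sum_sq {ι : Type*} [Fintype ι] (v : ι → ℝ) (i : ι) :
    |v i| ≤ √(∑ k, v k ^ 2) :=
  Real.abs_le_sqrt (single_le_sum (fun k _ => sq_nonneg (v k)) (mem_univ i))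

theorem Matrix.abs_apply_le_sqrt_sum_sum_sq {m n : Type*} [Fintype m] [Fintype n]
    (M : Matrix m n ℝ) (i : m) (k : n) : |M i k| ≤ √(∑ i, ∑ k, M i k ^ 2) :=
  Real.abs_le_sqrt ((single_le_sum (fun k _ => sq_nonneg (M i k)) (mem_univ k)).trans
    (single_le_sum (fun i _ => sum_nonneg fun k _ => sq_nonneg (M i k)) (mem_univ i)))

theorem optimisticValue_sup_dist_general {S A : Type*} [Fintype A] [Nonempty A]
    (d l : ℕ) (hl : 1 ≤ l)
    (φ : S → A → Fin d → ℝ) (hφ0 : ∀ s a i, 0 ≤ φ s a i)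
    (hφ1 : ∀ s a, ∑ i, φ s a i = 1) (r : S → A → ℝ)
    (β H : ℝ) (hβ : 0 < β)
    (w1 w2 : Fin l → Fin d → ℝ) (Γ1 Γ2 : Fin l → Matrix (Fin d) (Fin d) ℝ) :
    ∀ s : S, |optimisticValue d l φ r β H w1 Γ1 s - optimisticValue d l φ r β H w2 Γ2 s| ≤
      β * (⨆ j : Fin l, Real.sqrt (Real.sqrt (∑ i, ∑ k, (Γ1 j i k - Γ2 j i k) ^ 2))) +
        ⨆ j : Fin l, Real.sqrt (∑ i, (w1 j i - w2 j i) ^ 2) := by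
  intro s
  have : NeZero l := ⟨by omega⟩
  set MΓ := ⨆ j : Fin l, √√(∑ i, ∑ k, (Γ1 j i k - Γ2 j i k) ^ 2)
  set Mw := ⨆ j : Fin l, √(∑ i, (w1 j i - w2 j i) ^ 2)
  have hMw (j : Fin l) : √(∑ i, (w1 j i - w2 j i) ^ 2) ≤ Mw :=
    le_ciSup (f := fun j => √(∑ i, (w1 j i - w2 j i) ^ 2)) (Set.finite_range _).bddAbove j
  have hMΓ (j : Fin l) : √√(∑ i, ∑ k, (Γ1 j i k - Γ2 j i k) ^ 2) ≤ MΓ :=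
    le_ciSup (f := fun j => √√(∑ i, ∑ k, (Γ1 j i k - Γ2 j i k) ^ 2))
      (Set.finite_range _).bddAbove j
  unfold optimisticValue
  refine abs_ciSup_sub_ciSup_le fun a => abs_ciSup_sub_ciSup_le fun j => ?_
  have hw : |∑ i, φ s a i * w1 j i - ∑ i, φ s a i * w2 j i| ≤ Mw :=
    abs_sum_mul_sub_sum_mul_le (hφ0 s a) (hφ1 s a) fun i =>
      (abs_le_sqrt_sum_sq (w1 j - w2 j) i).trans (hMw j)
  have hΓ : |∑ i, φ s a i * √(Γ1 j i i) - ∑ i, φ s a i * √(Γ2 j i i)| ≤ MΓ :=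
    abs_sum_mul_sub_sum_mul_le (hφ0 s a) (hφ1 s a) fun i =>
      ((Real.abs_sqrt_sub_sqrt_le_sqrt_abs_sub _ _).trans
        (Real.sqrt_le_sqrt ((Γ1 j - Γ2 j).abs_apply_le_sqrt_sum_sum_sq i i))).trans (hMΓ j)
  refine (abs_min_sub_min_le_abs _ _ H).trans ?_
  calc _ = |(∑ i, φ s a i * w1 j i - ∑ i, φ s a i * w2 j i) +
          β * (∑ i, φ s a i * √(Γ1 j i i) - ∑ i, φ s a i * √(Γ2 j i i))| := by ring_nf
    _ ≤ Mw + β * MΓ := by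
        refine (abs_add_le _ _).trans (add_le_add hw ?_)
        rw [abs_mul, abs_of_pos hβ]
        exact mul_le_mul_of_nonneg_left hΓ hβ.le
    _ = β * MΓ + Mw := add_comm _ _

/-- The sup-distance estimate proved inside the paper's Lemma C.1: if `V₁, V₂` are two
members of the optimistic value function class `𝒱` with respective parameters
`(w_{1,j}, Γ_{1,j})` and `(w_{2,j}, Γ_{2,j})`, then
`sup_s |V₁(s) − V₂(s)| ≤ β · max_j √(‖Γ_{1,j} − Γ_{2,j}‖_F) + max_j ‖w_{1,j} − w_{2,j}‖₂`,
where `‖·‖_F` is the Frobenius norm. -/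
theorem optimisticValue_sup_dist {S A : Type*} [Nonempty S] [Fintype A] [Nonempty A]
    (d l : ℕ) (hd : 1 ≤ d) (hl : 1 ≤ l)
    (φ : S → A → Fin d → ℝ) (hφ0 : ∀ s a i, 0 ≤ φ s a i)
    (hφ1 : ∀ s a, ∑ i, φ s a i = 1) (r : S → A → ℝ)
    (β H L lam : ℝ) (hβ : 0 < β) (hH : 0 < H) (hL : 0 < L) (hlam : 0 < lam)
    (w1 w2 : Fin l → Fin d → ℝ) (Γ1 Γ2 : Fin l → Matrix (Fin d) (Fin d) ℝ)
    (hw1 : ∀ j, Real.sqrt (∑ i, w1 j i ^ 2) ≤ L)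
    (hw2 : ∀ j, Real.sqrt (∑ i, w2 j i ^ 2) ≤ L)
    (hΓ1 : ∀ j, Real.sqrt (∑ i, ∑ k, Γ1 j i k ^ 2) ≤ Real.sqrt d / lam)
    (hΓ2 : ∀ j, Real.sqrt (∑ i, ∑ k, Γ2 j i k ^ 2) ≤ Real.sqrt d / lam) :
    ∀ s : S, |optimisticValue d l φ r β H w1 Γ1 s - optimisticValue d l φ r β H w2 Γ2 s| ≤
      β * (⨆ j : Fin l, Real.sqrt (Real.sqrt (∑ i, ∑ k, (Γ1 j i k - Γ2 j i k) ^ 2))) +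
        ⨆ j : Fin l, Real.sqrt (∑ i, (w1 j i - w2 j i) ^ 2) :=
  optimisticValue_sup_dist_general d l hl φ hφ0 hφ1 r β H hβ w1 w2 Γ1 Γ2
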